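/- Let p be a prime and k a field of characteristic p, let A be the subring of k⟦t⟧ consisting of those power series Σ_{n≥0} aₙtⁿ with [k^p(a₀,a₁,…) : k^p] < ∞, and let c = Σ_{n≥0} aₙtⁿ ∈ k⟦t⟧ \ A. Define the tails c_i := Σ_{n≥0} a_{i+n}tⁿ for i ≥ 0. Then for every i ≥ 0: c_i = a_i + t·c_{i+1}; c_i lies in the subfield L := K(c) of k((t)); c_i is integral over A; c_i ∉ A; and the increasing chain of subrings A[c₀] ⊆ A[c₁] ⊆ A[c₂] ⊆ ⋯ of L is not stationary. -/

import Mathlib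

set_option synthInstance.maxHeartbeats 1000000
set_option maxHeartbeats 2000000

variable (k : Type*) [Field k] (p : ℕ) [Fact p.Prime] [CharP k p]

/-- The subfield `k^p` of `p`-th powers of the field `k` (of characteristic `p`). -/
noncomputable def pthPowerSubfield : Subfield k := (frobenius k p).fieldRange

variable {k p}

lemma isIntegral_pthPowerSubfield (a : k) : IsIntegral ↥(pthPowerSubfield k p) a := by
  refine ⟨Polynomial.X ^ p - Polynomial.C ⟨a ^ p, a, rfl⟩,
    Polynomial.monic_X_pow_sub_C _ (Fact.out : p.Prime).ne_zero, ?_⟩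
  simp only [Polynomial.eval₂_sub, Polynomial.eval₂_pow, Polynomial.eval₂_X, Polynomial.eval₂_C]
  exact sub_eq_zero.mpr rfl

variable (k p) in
/-- The field `k^p(a₀, a₁, …)` generated over `k^p` by the coefficients of a power
series `f` is a finite extension of `k^p`. -/
def HasFiniteCoeffField (f : PowerSeries k) : Prop :=
  FiniteDimensional ↥(pthPowerSubfield k p)
    ↥(IntermediateField.adjoin ↥(pthPowerSubfield k p)
      (Set.range fun n => PowerSeries.coeff n f))

lemma hasFiniteCoeffField_of_mem {f : PowerSeries k}
    (E : IntermediateField ↥(pthPowerSubfield k p) k) (hE : FiniteDimensional ↥(pthPowerSubfield k p) E)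
    (h : ∀ n, PowerSeries.coeff n f ∈ E) : HasFiniteCoeffField k p f := by
  have hle : IntermediateField.adjoin ↥(pthPowerSubfield k p)
      (Set.range fun n => PowerSeries.coeff n f) ≤ E := by
    rw [IntermediateField.adjoin_le_iff]
    rintro x ⟨n, rfl⟩; exact h n
  exact FiniteDimensional.of_injective
    (IntermediateField.inclusion hle).toLinearMap
    (IntermediateField.inclusion_injective hle)

variable (k p) in
/-- The subring `A ⊆ k⟦t⟧` of power series whose coefficients generate a finite
extension of `k^p`. -/
noncomputable def finiteCoeffSubring : Subring (PowerSeries k) where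
  carrier := {f | HasFiniteCoeffField k p f}
  zero_mem' := hasFiniteCoeffField_of_mem ⊥ inferInstance (fun n => by
    rw [map_zero]; exact zero_mem ⊥)
  one_mem' := hasFiniteCoeffField_of_mem ⊥ inferInstance (fun n => by
    rw [PowerSeries.coeff_one]
    split
    · exact one_mem ⊥
    · exact zero_mem ⊥)
  add_mem' := by
    intro f g hf hg
    haveI : FiniteDimensional ↥(pthPowerSubfield k p)
        ↥(IntermediateField.adjoin ↥(pthPowerSubfield k p)
          (Set.range fun n => PowerSeries.coeff n f)) := hf
    haveI : FiniteDimensional ↥(pthPowerSubfield k p)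
        ↥(IntermediateField.adjoin ↥(pthPowerSubfield k p)
          (Set.range fun n => PowerSeries.coeff n g)) := hg
    refine hasFiniteCoeffField_of_mem
      (IntermediateField.adjoin _ (Set.range fun n => PowerSeries.coeff n f) ⊔
        IntermediateField.adjoin _ (Set.range fun n => PowerSeries.coeff n g))
      inferInstance fun n => ?_
    rw [map_add]
    exact add_mem
      (le_sup_left (α := IntermediateField _ k) (IntermediateField.subset_adjoin _ _ ⟨n, rfl⟩))
      (le_sup_right (α := IntermediateField _ k) (IntermediateField.subset_adjoin _ _ ⟨n, rfl⟩))
  mul_mem' := by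
    intro f g hf hg
    haveI : FiniteDimensional ↥(pthPowerSubfield k p)
        ↥(IntermediateField.adjoin ↥(pthPowerSubfield k p)
          (Set.range fun n => PowerSeries.coeff n f)) := hf
    haveI : FiniteDimensional ↥(pthPowerSubfield k p)
        ↥(IntermediateField.adjoin ↥(pthPowerSubfield k p)
          (Set.range fun n => PowerSeries.coeff n g)) := hg
    refine hasFiniteCoeffField_of_mem
      (IntermediateField.adjoin _ (Set.range fun n => PowerSeries.coeff n f) ⊔
        IntermediateField.adjoin _ (Set.range fun n => PowerSeries.coeff n g))
      inferInstance fun n => ?_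
    rw [PowerSeries.coeff_mul]
    refine sum_mem fun c _ => mul_mem
      (le_sup_left (α := IntermediateField _ k) (IntermediateField.subset_adjoin _ _ ⟨c.1, rfl⟩))
      (le_sup_right (α := IntermediateField _ k) (IntermediateField.subset_adjoin _ _ ⟨c.2, rfl⟩))
  neg_mem' := by
    intro f hf
    haveI : FiniteDimensional ↥(pthPowerSubfield k p)
        ↥(IntermediateField.adjoin ↥(pthPowerSubfield k p)
          (Set.range fun n => PowerSeries.coeff n f)) := hf
    refine hasFiniteCoeffField_of_mem
      (IntermediateField.adjoin _ (Set.range fun n => PowerSeries.coeff n f))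
      inferInstance fun n => ?_
    rw [map_neg]
    exact neg_mem (IntermediateField.subset_adjoin _ _ ⟨n, rfl⟩)

variable (k p) in
/-- The subfield `L = K(c)` of `k((t))` generated by the subring `A = finiteCoeffSubring`
(hence by its fraction field `K`) together with the element `c ∈ k⟦t⟧`. -/
noncomputable def adjoinElemSubfield (c : PowerSeries k) : Subfield (LaurentSeries k) :=
  Subfield.closure
    ((HahnSeries.ofPowerSeries ℤ k) '' (finiteCoeffSubring k p : Set (PowerSeries k)) ∪
      {HahnSeries.ofPowerSeries ℤ k c})

/-- The `i`-th tail `c_i = Σ_{n≥0} a_{i+n} tⁿ` of a power series `c = Σ_{n≥0} aₙ tⁿ`. -/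
noncomputable def tailSeries (c : PowerSeries k) (i : ℕ) : PowerSeries k :=
  PowerSeries.mk fun n => PowerSeries.coeff (i + n) c

variable (k p) in
/-- The subring `A[c_i]` of `L ⊆ k((t))` generated by `A` and the `i`-th tail of `c`. -/
noncomputable def tailChainRing (c : PowerSeries k) (i : ℕ) : Subring (LaurentSeries k) :=
  Subring.closure
    ((HahnSeries.ofPowerSeries ℤ k) '' (finiteCoeffSubring k p : Set (PowerSeries k)) ∪
      {HahnSeries.ofPowerSeries ℤ k (tailSeries c i)})


/-!
Since `A` contains all `p`-th powers, `c_i` is a root of `X ^ p - c_i ^ p ∈ A[X]`, so it is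
integral and every element of `A[c_i]` is a polynomial of degree `< p` in `c_i`. Coefficients
of a quotient of power series stay in the field generated by the coefficients of numerator and
denominator, so `K ∩ k⟦t⟧ = A`; hence `c_i ∉ K`, `X ^ p - c_i ^ p` is irreducible over `K`, and
`1, c_i, …, c_i ^ (p - 1)` are linearly independent over `K`. If `c_{N+1} = r(c_N)` with
`deg r < p`, substituting `c_N = a_N + t c_{N+1}` gives a relation of degree `< p` for `c_{N+1}`
whose linear coefficient is `-1` modulo `t`; it cannot vanish since `t` is not a unit of `A`.
-/

namespace PowerSeries

variable {R S : Type*} [Field R] [SetLike S R] [SubfieldClass S R] (E : S)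

theorem coeff_mem_of_mul_eq_of_constantCoeff_ne_zero {f g x : PowerSeries R}
    (hf : ∀ n, coeff n f ∈ E) (hg : ∀ n, coeff n g ∈ E) (hg0 : constantCoeff g ≠ 0)
    (hx : x * g = f) (n : ℕ) : coeff n x ∈ E := by
  induction n using Nat.strong_induction_on with
  | _ n ih =>
    have hfn : ∑ i ∈ Finset.range n, coeff i x * coeff (n - i) g +
        coeff n x * constantCoeff g = coeff n f := by
      rw [← hx, coeff_mul, Finset.Nat.sum_antidiagonal_eq_sum_range_succ
        (fun i j => coeff i x * coeff j g), Finset.sum_range_succ, Nat.sub_self,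
        coeff_zero_eq_constantCoeff]
    rw [← eq_sub_iff_add_eq', ← eq_div_iff hg0] at hfn
    rw [hfn]
    refine div_mem (sub_mem (hf n) (sum_mem fun i hi => ?_)) (by simpa using hg 0)
    exact mul_mem (ih i (Finset.mem_range.mp hi)) (hg _)

theorem coeff_mem_of_mul_eq {f g x : PowerSeries R}
    (hf : ∀ n, coeff n f ∈ E) (hg : ∀ n, coeff n g ∈ E) (hg0 : g ≠ 0)
    (hx : x * g = f) (n : ℕ) : coeff n x ∈ E := by
  set m := g.order.toNat
  refine coeff_mem_of_mul_eq_of_constantCoeff_ne_zero E (f := mk fun n => coeff (n + m) f)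
    (fun n => by simpa using hf (n + m)) (fun n => by simpa [coeff_divXPowOrder] using hg (n + m))
    (constantCoeff_divXPowOrder_eq_zero_iff.not.mpr hg0) ?_ n
  ext j
  rw [coeff_mk, ← hx]
  conv_rhs => rw [← X_pow_order_mul_divXPowOrder (f := g), mul_left_comm, coeff_X_pow_mul]

end PowerSeries

section FiniteCoeffSubring

open PowerSeries

theorem mem_finiteCoeffSubring_iff {f : PowerSeries k} :
    f ∈ finiteCoeffSubring k p ↔ ∃ E : IntermediateField (pthPowerSubfield k p) k,
      FiniteDimensional (pthPowerSubfield k p) E ∧ ∀ n, coeff n f ∈ E :=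
  ⟨fun hf => ⟨_, hf, fun n => IntermediateField.subset_adjoin _ _ ⟨n, rfl⟩⟩,
    fun ⟨E, hE, hfE⟩ => hasFiniteCoeffField_of_mem E hE hfE⟩

theorem C_mem_finiteCoeffSubring (a : k) : C a ∈ finiteCoeffSubring k p := by
  refine hasFiniteCoeffField_of_mem _
    (IntermediateField.adjoin.finiteDimensional (isIntegral_pthPowerSubfield a)) fun n => ?_
  rw [coeff_C]
  split_ifs
  · exact IntermediateField.mem_adjoin_simple_self _ a
  · exact zero_mem _

theorem X_mem_finiteCoeffSubring : (X : PowerSeries k) ∈ finiteCoeffSubring k p := by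
  refine hasFiniteCoeffField_of_mem ⊥ inferInstance fun n => ?_
  rw [coeff_X]
  split_ifs
  · exact one_mem _
  · exact zero_mem _

theorem pow_char_mem_finiteCoeffSubring (f : PowerSeries k) : f ^ p ∈ finiteCoeffSubring k p := by
  have hp := (Fact.out : p.Prime).ne_zero
  refine hasFiniteCoeffField_of_mem ⊥ inferInstance fun n => ?_
  rw [← MvPowerSeries.map_frobenius_expand p hp]
  exact IntermediateField.mem_bot.mpr ⟨⟨_, _, rfl⟩, rfl⟩

theorem mem_finiteCoeffSubring_of_mul_eq {f g x : PowerSeries k}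
    (hf : f ∈ finiteCoeffSubring k p) (hg : g ∈ finiteCoeffSubring k p) (hg0 : g ≠ 0)
    (hx : x * g = f) : x ∈ finiteCoeffSubring k p := by
  obtain ⟨E, hE, hfE⟩ := mem_finiteCoeffSubring_iff.mp hf
  obtain ⟨F, hF, hgF⟩ := mem_finiteCoeffSubring_iff.mp hg
  exact hasFiniteCoeffField_of_mem (E ⊔ F) inferInstance <|
    coeff_mem_of_mul_eq (E ⊔ F) (fun n => le_sup_left (a := E) (hfE n))
      (fun n => le_sup_right (a := E) (hgF n)) hg0 hx

end FiniteCoeffSubring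

section Tails

open PowerSeries

theorem tailSeries_zero (c : PowerSeries k) : tailSeries c 0 = c := by
  ext n
  simp [tailSeries]

theorem tailSeries_eq_C_add_X_mul (c : PowerSeries k) (i : ℕ) :
    tailSeries c i = C (coeff i c) + X * tailSeries c (i + 1) := by
  ext (_ | n)
  · simp [tailSeries]
  · simp [tailSeries, coeff_succ_X_mul, add_assoc, add_comm 1 n]

theorem mem_finiteCoeffSubring_of_tailSeries_mem {c : PowerSeries k} {i : ℕ}
    (hi : tailSeries c i ∈ finiteCoeffSubring k p) : c ∈ finiteCoeffSubring k p := by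
  induction i with
  | zero => rwa [tailSeries_zero] at hi
  | succ i ih =>
    refine ih ?_
    rw [tailSeries_eq_C_add_X_mul]
    exact add_mem (C_mem_finiteCoeffSubring _) (mul_mem X_mem_finiteCoeffSubring hi)

end Tails

section CharP

open Polynomial

theorem Subfield.eq_zero_of_aeval_eq_zero_of_natDegree_lt {L : Type*} [Field L] [CharP L p]
    {K : Subfield L} {ξ : L} (hξ : ξ ∉ K) (hξp : ξ ^ p ∈ K) {q : K[X]} (hq : q.natDegree < p)
    (h : aeval ξ q = 0) : q = 0 := by
  have hp : p.Prime := Fact.out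
  by_contra hq0
  have hirr : Irreducible (X ^ p - C (⟨ξ ^ p, hξp⟩ : K)) :=
    X_pow_sub_C_irreducible_of_prime hp fun b hb =>
      hξ (frobenius_inj L p (congrArg Subtype.val hb) ▸ b.2)
  have hmin : minpoly K ξ = X ^ p - C ⟨ξ ^ p, hξp⟩ :=
    (minpoly.eq_of_irreducible_of_monic hirr (by simp [sub_eq_zero]; rfl)
      (monic_X_pow_sub_C _ hp.ne_zero)).symm
  have hle := natDegree_le_natDegree (minpoly.degree_le_of_ne_zero K ξ hq0 h)
  rw [hmin, natDegree_X_pow_sub_C] at hle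
  omega

variable {R L : Type*} [CommRing R] [Field L] [Algebra R L]

theorem eq_zero_of_aeval_eq_zero_of_natDegree_lt [CharP L p]
    (hinj : Function.Injective (algebraMap R L)) {ξ : L}
    (hξ : ξ ∉ Subfield.closure (Set.range (algebraMap R L)))
    (hξp : ξ ^ p ∈ Set.range (algebraMap R L)) {q : R[X]} (hq : q.natDegree < p)
    (h : aeval ξ q = 0) : q = 0 := by
  set K := Subfield.closure (Set.range (algebraMap R L))
  let ψ : R →+* K := (algebraMap R L).codRestrict K fun r => Subfield.subset_closure ⟨r, rfl⟩
  have hψ : Function.Injective ψ := fun r s hrs => hinj (congrArg Subtype.val hrs)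
  refine (Polynomial.map_eq_zero_iff hψ).mp <|
    Subfield.eq_zero_of_aeval_eq_zero_of_natDegree_lt hξ (Subfield.subset_closure hξp) ?_ ?_
  · rwa [natDegree_map_eq_of_injective hψ]
  · rwa [aeval_def, eval₂_map]

theorem exists_natDegree_lt_aeval_eq_of_mem_adjoin {A : Type*} [CommRing A] [Algebra R A]
    [Nontrivial R] {x : A} {n : ℕ} (hn : 0 < n) {b : R} (hb : x ^ n = algebraMap R A b)
    {z : A} (hz : z ∈ Algebra.adjoin R {x}) : ∃ r : R[X], r.natDegree < n ∧ aeval x r = z := by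
  rw [Algebra.adjoin_singleton_eq_range_aeval] at hz
  obtain ⟨q, rfl⟩ := hz
  have hmonic : (X ^ n - C b).Monic := monic_X_pow_sub_C b hn.ne'
  have hne : X ^ n - C b ≠ 1 := fun h => by
    simpa [hn.ne'] using congrArg natDegree h
  refine ⟨q %ₘ (X ^ n - C b), ?_, aeval_modByMonic_eq_self_of_root (by simp [hb])⟩
  simpa using natDegree_modByMonic_lt q hmonic hne

theorem comp_C_mul_X_add_C_sub_X_ne_zero {t : R} (ht : ¬IsUnit t) (r : R[X]) (a : R) :
    r.comp (C t * X + C a) - X ≠ 0 := by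
  -- modulo `t`, this polynomial is a constant minus `X`
  let π := Ideal.Quotient.mk (Ideal.span {t})
  have : Nontrivial (R ⧸ Ideal.span {t}) :=
    Ideal.Quotient.nontrivial_iff.mpr (by rwa [Ne, Ideal.span_singleton_eq_top])
  intro h
  have hπ := congrArg (map π) h
  simp only [Polynomial.map_sub, map_comp, Polynomial.map_add, Polynomial.map_mul, map_C, map_X,
    π, Ideal.Quotient.eq_zero_iff_mem.mpr (Ideal.mem_span_singleton_self t), C_0, zero_mul,
    zero_add, comp_C, Polynomial.map_zero] at hπ
  exact X_sub_C_ne_zero _ (neg_eq_zero.mp (by rwa [neg_sub]))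

theorem notMem_adjoin_add_mul [CharP L p] (hinj : Function.Injective (algebraMap R L)) {ξ : L}
    (hξ : ξ ∉ Subfield.closure (Set.range (algebraMap R L)))
    (hξp : ξ ^ p ∈ Set.range (algebraMap R L)) {a t : R} (ht : ¬IsUnit t) :
    ξ ∉ Algebra.adjoin R {algebraMap R L a + algebraMap R L t * ξ} := by
  have hp : p.Prime := Fact.out
  have := (algebraMap R L).domain_nontrivial
  intro hmem
  obtain ⟨b, hb⟩ := hξp
  have hηp : (algebraMap R L a + algebraMap R L t * ξ) ^ p =
      algebraMap R L (a ^ p + t ^ p * b) := by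
    rw [add_pow_char, mul_pow, ← hb, map_add, map_mul, map_pow, map_pow]
  obtain ⟨r, hr, hrξ⟩ := exists_natDegree_lt_aeval_eq_of_mem_adjoin hp.pos hηp hmem
  refine comp_C_mul_X_add_C_sub_X_ne_zero ht r a <|
    eq_zero_of_aeval_eq_zero_of_natDegree_lt hinj hξ ⟨b, hb⟩ ?_ ?_
  · have hcomp := (natDegree_comp_le (p := r) (q := C t * X + C a)).trans
      (Nat.mul_le_mul_left _ natDegree_linear_le)
    have hsub := natDegree_sub_le (r.comp (C t * X + C a)) X
    rw [natDegree_X] at hsub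
    have := hp.two_le
    omega
  · simp only [map_sub, aeval_comp, map_add, map_mul, aeval_C, aeval_X]
    rw [add_comm, hrξ, sub_self]

end CharP

section LaurentSeries

open PowerSeries

local notation "A" => finiteCoeffSubring k p
local notation "ι" => HahnSeries.ofPowerSeries ℤ k

theorem algebraMap_finiteCoeffSubring_injective :
    Function.Injective (algebraMap A (LaurentSeries k)) :=
  HahnSeries.ofPowerSeries_injective.comp Subtype.val_injective

theorem mem_finiteCoeffSubring_of_ofPowerSeries_mem_closure {x : PowerSeries k}
    (hx : ι x ∈ Subfield.closure (Set.range (algebraMap A (LaurentSeries k)))) : x ∈ A := by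
  rw [Subfield.mem_closure_iff, ← RingHom.coe_range, Subring.closure_eq] at hx
  obtain ⟨_, ⟨a, rfl⟩, _, ⟨b, rfl⟩, hab⟩ := hx
  change ι a / ι b = ι x at hab
  have hι : Function.Injective ι := HahnSeries.ofPowerSeries_injective
  by_cases hb : (b : PowerSeries k) = 0
  · have hx0 : x = 0 := hι <| by simp [← hab, hb]
    exact hx0 ▸ zero_mem _
  refine mem_finiteCoeffSubring_of_mul_eq a.2 b.2 hb (hι ?_)
  rw [map_mul, ← hab]
  exact div_mul_cancel₀ _ ((map_ne_zero_iff _ hι).mpr hb)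

theorem tailChainRing_eq_adjoin (c : PowerSeries k) (i : ℕ) :
    tailChainRing k p c i = (Algebra.adjoin A {ι (tailSeries c i)}).toSubring := by
  rw [Algebra.adjoin_eq_ring_closure, tailChainRing]
  congr
  exact Set.image_eq_range _ _

theorem ofPowerSeries_tailSeries_eq (c : PowerSeries k) (i : ℕ) :
    ι (tailSeries c i) =
      algebraMap A (LaurentSeries k) ⟨C (coeff i c), C_mem_finiteCoeffSubring _⟩ +
        algebraMap A (LaurentSeries k) ⟨X, X_mem_finiteCoeffSubring⟩ *
          ι (tailSeries c (i + 1)) := by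
  rw [tailSeries_eq_C_add_X_mul c i, map_add, map_mul]
  rfl

theorem ofPowerSeries_tailSeries_mem_adjoinElemSubfield (c : PowerSeries k) (i : ℕ) :
    ι (tailSeries c i) ∈ adjoinElemSubfield k p c := by
  induction i with
  | zero =>
    rw [tailSeries_zero]
    exact Subfield.subset_closure (Or.inr rfl)
  | succ i ih =>
    have hA (a : A) : algebraMap A (LaurentSeries k) a ∈ adjoinElemSubfield k p c :=
      Subfield.subset_closure (Or.inl ⟨a, a.2, rfl⟩)
    have hX : algebraMap A (LaurentSeries k) ⟨X, X_mem_finiteCoeffSubring⟩ ≠ 0 :=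
      (map_ne_zero_iff _ algebraMap_finiteCoeffSubring_injective).mpr
        (Subtype.coe_ne_coe.mp X_ne_zero)
    rw [ofPowerSeries_tailSeries_eq c i] at ih
    have hdiv := div_mem (sub_mem ih (hA ⟨C (coeff i c), C_mem_finiteCoeffSubring _⟩))
      (hA ⟨X, X_mem_finiteCoeffSubring⟩)
    rwa [add_sub_cancel_left, mul_div_cancel_left₀ _ hX] at hdiv

theorem isIntegral_ofPowerSeries (f : PowerSeries k) : IsIntegral A (ι f) :=
  IsIntegral.of_pow (Fact.out : p.Prime).pos <| by
    rw [← map_pow]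
    exact isIntegral_algebraMap (x := (⟨f ^ p, pow_char_mem_finiteCoeffSubring f⟩ : A))

theorem tailChainRing_mono (c : PowerSeries k) (i : ℕ) :
    tailChainRing k p c i ≤ tailChainRing k p c (i + 1) := by
  rw [tailChainRing_eq_adjoin, tailChainRing_eq_adjoin]
  refine fun x hx => (Algebra.adjoin_le (Set.singleton_subset_iff.mpr ?_) : _ ≤ _) hx
  rw [ofPowerSeries_tailSeries_eq c i]
  exact add_mem (Subalgebra.algebraMap_mem _ _)
    (mul_mem (Subalgebra.algebraMap_mem _ _) (Algebra.self_mem_adjoin_singleton _ _))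

theorem ofPowerSeries_tailSeries_succ_notMem_tailChainRing {c : PowerSeries k}
    (hc : c ∉ A) (i : ℕ) : ι (tailSeries c (i + 1)) ∉ tailChainRing k p c i := by
  have : CharP (LaurentSeries k) p :=
    charP_of_injective_algebraMap (algebraMap k (LaurentSeries k)).injective p
  rw [tailChainRing_eq_adjoin, Subalgebra.mem_toSubring, ofPowerSeries_tailSeries_eq]
  refine notMem_adjoin_add_mul algebraMap_finiteCoeffSubring_injective (fun h => hc ?_)
    ⟨⟨_, pow_char_mem_finiteCoeffSubring _⟩, map_pow ι _ p⟩ fun hX => ?_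
  · exact mem_finiteCoeffSubring_of_tailSeries_mem
      (mem_finiteCoeffSubring_of_ofPowerSeries_mem_closure h)
  · simpa using isUnit_iff_constantCoeff.mp (hX.map (finiteCoeffSubring k p).subtype)

end LaurentSeries

/-- For `c ∈ k⟦t⟧ \ A` with tails `c_i`: `c_i = a_i + t·c_{i+1}`;
`c_i` lies in `L = K(c)`; `c_i` is integral over `A`; `c_i ∉ A`; and the increasing
chain of subrings `A[c₀] ⊆ A[c₁] ⊆ ⋯` of `L` is not stationary. -/
theorem tailSeries_properties (c : PowerSeries k) (hc : c ∉ finiteCoeffSubring k p) :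
    (∀ i, tailSeries c i =
      PowerSeries.C (PowerSeries.coeff i c) + PowerSeries.X * tailSeries c (i + 1)) ∧
    (∀ i, (HahnSeries.ofPowerSeries ℤ k) (tailSeries c i) ∈ adjoinElemSubfield k p c) ∧
    (letI : Algebra ↥(finiteCoeffSubring k p) (LaurentSeries k) :=
        ((HahnSeries.ofPowerSeries ℤ k).comp (finiteCoeffSubring k p).subtype).toAlgebra
      ∀ i, IsIntegral ↥(finiteCoeffSubring k p)
        ((HahnSeries.ofPowerSeries ℤ k) (tailSeries c i))) ∧
    (∀ i, tailSeries c i ∉ finiteCoeffSubring k p) ∧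
    (∀ i, tailChainRing k p c i ≤ tailChainRing k p c (i + 1)) ∧
    ¬ ∃ N, ∀ i, N ≤ i → tailChainRing k p c i = tailChainRing k p c N := by
  refine ⟨tailSeries_eq_C_add_X_mul c, ofPowerSeries_tailSeries_mem_adjoinElemSubfield c,
    fun i => isIntegral_ofPowerSeries _,
    fun i hi => hc (mem_finiteCoeffSubring_of_tailSeries_mem hi), tailChainRing_mono c, ?_⟩
  rintro ⟨N, hN⟩
  apply ofPowerSeries_tailSeries_succ_notMem_tailChainRing hc N
  rw [← hN (N + 1) N.le_succ]
  exact Subring.subset_closure (Or.inr rfl)
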